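/- Let M be a compact Riemannian manifold with a G-invariant metric for a compact Lie group G, Φ a G-invariant Morse function, p, q critical points, and c a point in W^u(p) ∩ W^s(q) with p ≠ q. Consider the G × ℝ action (g,t)·c = g·γ_c(t) on W^u(p) ∩ W^s(q). If (g,t) stabilizes c and G·c is closed in W^u(p) ∩ W^s(q), then t = 0. In other words, the stabilizer of c in G × ℝ equals G_c × {0}. -/

import Mathlib

open Manifold Filter Topology

/-!
`Φ` is `G`-invariant and strictly decreasing along the flow line `γ c`, so `g • γ c t = c` forces
`Φ (γ c t) = Φ c = Φ (γ c 0)`, hence `t = 0`. Strict monotonicity holds because `∇Φ` never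
vanishes on `γ c`: by uniqueness of integral curves, a zero of `∇Φ` on the flow line would make
`γ c` constant, so its limits `p` and `q` at `∓∞` would coincide.
-/

section IntegralCurve

variable {E : Type*} [NormedAddCommGroup E] [NormedSpace ℝ E]
  {H : Type*} [TopologicalSpace H] {I : ModelWithCorners ℝ E H}
  {M : Type*} [TopologicalSpace M] [ChartedSpace H M]

theorem IsMIntegralCurve.hasDerivAt_comp {γ : ℝ → M} {v : (x : M) → TangentSpace I x}
    (hγ : IsMIntegralCurve γ v) {Φ : M → ℝ} {Φ' : M → E →L[ℝ] ℝ}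
    (hΦ : ∀ x, HasMFDerivAt I 𝓘(ℝ) Φ x (Φ' x)) (t : ℝ) :
    HasDerivAt (Φ ∘ γ) (Φ' (γ t) (v (γ t))) t := by
  have h := ((hΦ (γ t)).comp t (hγ t)).hasFDerivAt
  rw [hasDerivAt_iff_hasFDerivAt]
  refine h.congr_fderiv ?_
  ext
  change Φ' (γ t) ((1 : ℝ) • v (γ t)) = (1 : ℝ) • Φ' (γ t) (v (γ t))
  simp

theorem IsMIntegralCurve.strictAnti_comp {γ : ℝ → M} {v : (x : M) → TangentSpace I x}
    (hγ : IsMIntegralCurve γ v) {Φ : M → ℝ} {Φ' : M → E →L[ℝ] ℝ}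
    (hΦ : ∀ x, HasMFDerivAt I 𝓘(ℝ) Φ x (Φ' x))
    (hneg : ∀ t, Φ' (γ t) (v (γ t)) < 0) : StrictAnti (Φ ∘ γ) :=
  strictAnti_of_deriv_neg fun t => (hγ.hasDerivAt_comp hΦ t).deriv ▸ hneg t

variable {v : (x : M) → TangentSpace I x} {γ : M → ℝ → M}

theorem flow_add_eq (hode : ∀ x, IsMIntegralCurve (γ x) v)
    (huniq : ∀ x (δ : ℝ → M), δ 0 = x → IsMIntegralCurve δ v → δ = γ x) (x : M) (s t : ℝ) :
    γ x (t + s) = γ (γ x s) t :=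
  congrFun (huniq _ _ (by simp) ((hode x).comp_add s)) t

theorem flow_eq_const_of_apply_eq_zero (hode : ∀ x, IsMIntegralCurve (γ x) v)
    (huniq : ∀ x (δ : ℝ → M), δ 0 = x → IsMIntegralCurve δ v → δ = γ x) {x : M} {s : ℝ}
    (h : v (γ x s) = 0) : γ x = fun _ => γ x s := by
  funext t
  rw [← sub_add_cancel t s, flow_add_eq hode huniq, ← huniq _ _ rfl (isMIntegralCurve_const h)]

theorem flow_apply_ne_zero_of_tendsto [T1Space M] (hode : ∀ x, IsMIntegralCurve (γ x) v)
    (huniq : ∀ x (δ : ℝ → M), δ 0 = x → IsMIntegralCurve δ v → δ = γ x) {x p q : M}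
    (hpq : p ≠ q) (hp : Tendsto (γ x) atBot (𝓝 p)) (hq : Tendsto (γ x) atTop (𝓝 q)) (s : ℝ) :
    v (γ x s) ≠ 0 := by
  intro h
  rw [flow_eq_const_of_apply_eq_zero hode huniq h, tendsto_const_nhds_iff] at hp hq
  exact hpq (hp ▸ hq)

end IntegralCurve

theorem setOf_smul_apply_eq_apply_zero {G X β : Type*} [SMul G X] (Φ : X → β)
    (hΦ : ∀ (g : G) x, Φ (g • x) = Φ x) {f : ℝ → X} (hf : Function.Injective (Φ ∘ f))
    {c : X} (hc : f 0 = c) :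
    {gt : G × ℝ | gt.1 • f gt.2 = c} = {gt : G × ℝ | gt.1 • c = c ∧ gt.2 = 0} := by
  ext ⟨g, t⟩
  constructor
  · intro (h : g • f t = c)
    have ht : t = 0 := hf (by simp only [Function.comp_apply, ← hΦ g (f t), h, hc])
    exact ⟨by rwa [ht, hc] at h, ht⟩
  · rintro ⟨h, rfl : t = 0⟩
    exact (congrArg (g • ·) hc).trans h

theorem stabilizer_eq_prod_general
    {E : Type*} [NormedAddCommGroup E] [NormedSpace ℝ E]
    {M : Type*} [TopologicalSpace M] [ChartedSpace E M]
    [T2Space M]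
    {G : Type*} [Group G]
    [MulAction G M]
    -- the G-invariant Riemannian metric
    (riem : M → E →ₗ[ℝ] E →ₗ[ℝ] ℝ)
    (hpos : ∀ (p : M) (v : E), v ≠ 0 → 0 < riem p v v)
    (Φ : M → ℝ) (hΦ : ContMDiff 𝓘(ℝ, E) 𝓘(ℝ) (⊤ : ℕ∞) Φ)
    (hΦinv : ∀ (g : G) (p : M), Φ (g • p) = Φ p)
    -- the gradient of Φ with respect to the invariant metric
    (grad : M → E)
    (hgrad : ∀ (p : M) (v : E), riem p (grad p) v = mfderiv 𝓘(ℝ, E) 𝓘(ℝ) Φ p v)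
    -- the negative gradient flow: γ p is the unique solution of γ(0) = p, γ' = -∇Φ(γ)
    (γ : M → ℝ → M)
    (hγ0 : ∀ p : M, γ p 0 = p)
    (hode : ∀ (p : M) (t : ℝ), HasMFDerivAt 𝓘(ℝ, ℝ) 𝓘(ℝ, E) (γ p) t
      (ContinuousLinearMap.smulRight (1 : ℝ →L[ℝ] ℝ) (-grad (γ p t))))
    (huniq : ∀ (p : M) (δ : ℝ → M), δ 0 = p →
      (∀ t : ℝ, HasMFDerivAt 𝓘(ℝ, ℝ) 𝓘(ℝ, E) δ t
        (ContinuousLinearMap.smulRight (1 : ℝ →L[ℝ] ℝ) (-grad (δ t)))) → δ = γ p)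
    (p q : M) (hpq : p ≠ q)
    -- c lies in W^u(p) ∩ W^s(q)
    (c : M) (hcu : Tendsto (γ c) atBot (𝓝 p)) (hcs : Tendsto (γ c) atTop (𝓝 q)) :
    {gt : G × ℝ | gt.1 • γ c gt.2 = c} = {gt : G × ℝ | gt.1 • c = c ∧ gt.2 = 0} := by
  have hflow : ∀ x, IsMIntegralCurve (γ x) fun y => -grad y := hode
  -- `mfderiv` takes values in tangent spaces; `dΦ` retypes it so that `map_neg` applies.
  let dΦ : M → E →L[ℝ] ℝ := fun x => mfderiv 𝓘(ℝ, E) 𝓘(ℝ) Φ x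
  have hΦ' : ∀ x, HasMFDerivAt 𝓘(ℝ, E) 𝓘(ℝ) Φ x (dΦ x) :=
    fun x => (hΦ.mdifferentiable (by simp) x).hasMFDerivAt
  have hdΦ : ∀ x w, dΦ x w = riem x (grad x) w := fun x w => (hgrad x w).symm
  have hne := flow_apply_ne_zero_of_tendsto hflow huniq hpq hcu hcs
  have hanti : StrictAnti (Φ ∘ γ c) := (hflow c).strictAnti_comp hΦ' fun t => by
    rw [map_neg, hdΦ]
    exact neg_neg_of_pos (hpos _ _ (neg_ne_zero.mp (hne t)))
  exact setOf_smul_apply_eq_apply_zero Φ hΦinv hanti.injective (hγ0 c)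

/-- In the invariant Morse setting (compact `M`, `G`-invariant metric and
Morse function `Φ`, negative gradient flow `γ`), let `p ≠ q` be critical points and
`c ∈ W^u(p) ∩ W^s(q)`. Consider the `G × ℝ`-action `(g,t) • c = g • γ_c(t)`. If the orbit
`G • c` is closed in `W^u(p) ∩ W^s(q)`, then the stabilizer of `c` in `G × ℝ` is
`G_c × {0}`: whenever `(g,t)` stabilizes `c` we must have `t = 0`. -/
theorem stabilizer_eq_prod
    {E : Type*} [NormedAddCommGroup E] [NormedSpace ℝ E]
    {M : Type*} [TopologicalSpace M] [ChartedSpace E M]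
    [IsManifold 𝓘(ℝ, E) (⊤ : ℕ∞) M] [CompactSpace M] [T2Space M]
    {F : Type*} [NormedAddCommGroup F] [NormedSpace ℝ F]
    {G : Type*} [TopologicalSpace G] [ChartedSpace F G] [Group G]
    [LieGroup 𝓘(ℝ, F) (⊤ : ℕ∞) G] [CompactSpace G]
    [MulAction G M]
    (hact : ∀ g : G, ContMDiff 𝓘(ℝ, E) 𝓘(ℝ, E) (⊤ : ℕ∞) (fun p : M => g • p))
    -- the G-invariant Riemannian metric
    (riem : M → E →ₗ[ℝ] E →ₗ[ℝ] ℝ)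
    (hsymm : ∀ (p : M) (v w : E), riem p v w = riem p w v)
    (hpos : ∀ (p : M) (v : E), v ≠ 0 → 0 < riem p v v)
    (hinv : ∀ (g : G) (p : M) (v w : E),
      riem (g • p) (mfderiv 𝓘(ℝ, E) 𝓘(ℝ, E) (fun x : M => g • x) p v)
        (mfderiv 𝓘(ℝ, E) 𝓘(ℝ, E) (fun x : M => g • x) p w) = riem p v w)
    (Φ : M → ℝ) (hΦ : ContMDiff 𝓘(ℝ, E) 𝓘(ℝ) (⊤ : ℕ∞) Φ)
    (hΦinv : ∀ (g : G) (p : M), Φ (g • p) = Φ p)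
    -- the gradient of Φ with respect to the invariant metric
    (grad : M → E)
    (hgrad : ∀ (p : M) (v : E), riem p (grad p) v = mfderiv 𝓘(ℝ, E) 𝓘(ℝ) Φ p v)
    -- the negative gradient flow: γ p is the unique solution of γ(0) = p, γ' = -∇Φ(γ)
    (γ : M → ℝ → M)
    (hγ0 : ∀ p : M, γ p 0 = p)
    (hode : ∀ (p : M) (t : ℝ), HasMFDerivAt 𝓘(ℝ, ℝ) 𝓘(ℝ, E) (γ p) t
      (ContinuousLinearMap.smulRight (1 : ℝ →L[ℝ] ℝ) (-grad (γ p t))))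
    (huniq : ∀ (p : M) (δ : ℝ → M), δ 0 = p →
      (∀ t : ℝ, HasMFDerivAt 𝓘(ℝ, ℝ) 𝓘(ℝ, E) δ t
        (ContinuousLinearMap.smulRight (1 : ℝ →L[ℝ] ℝ) (-grad (δ t)))) → δ = γ p)
    -- Φ is a Morse function: its critical set is finite
    (hmorse : {x : M | mfderiv 𝓘(ℝ, E) 𝓘(ℝ) Φ x = 0}.Finite)
    (p q : M) (hpq : p ≠ q)
    (hp : mfderiv 𝓘(ℝ, E) 𝓘(ℝ) Φ p = 0) (hq : mfderiv 𝓘(ℝ, E) 𝓘(ℝ) Φ q = 0)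
    -- c lies in W^u(p) ∩ W^s(q)
    (c : M) (hcu : Tendsto (γ c) atBot (𝓝 p)) (hcs : Tendsto (γ c) atTop (𝓝 q))
    -- the orbit G • c is closed in W^u(p) ∩ W^s(q)
    (hclosed : IsClosed ((↑) ⁻¹' MulAction.orbit G c :
      Set {x : M | Tendsto (γ x) atBot (𝓝 p) ∧ Tendsto (γ x) atTop (𝓝 q)})) :
    {gt : G × ℝ | gt.1 • γ c gt.2 = c} = {gt : G × ℝ | gt.1 • c = c ∧ gt.2 = 0} :=
  stabilizer_eq_prod_general riem hpos Φ hΦ hΦinv grad hgrad γ hγ0 hode huniq p q hpq c hcu hcs
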